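/- arXiv:2309.08149 — 2 statements merged into one kernel-verified Lean document; each statement's English description precedes it below -/
import Mathlib

section
/- If a square matrix A satisfies A'PA - P = -Q for some positive definite matrices P and Q, then every eigenvalue of A has absolute value strictly less than 1. -/
/-!
For an eigenpair `A v = μ v` with `v ≠ 0`, sandwiching the Lyapunov equation between `v*` and `v`
gives `(|μ|² - 1) v*Pv = -v*Qv`; both quadratic forms are positive, so `|μ| < 1`. Real positive
definite matrices stay positive definite on `ℂⁿ`, because `v*Pv = xᵀPx + yᵀPy` for `v = x + iy`.
-/

open Matrix
open scoped ComplexOrder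

namespace Matrix

variable {ι 𝕜 : Type*} [Fintype ι] [RCLike 𝕜]

lemma re_star_dotProduct_map_ofReal_mulVec (P : Matrix ι ι ℝ) (v : ι → 𝕜) :
    RCLike.re (star v ⬝ᵥ P.map (algebraMap ℝ 𝕜) *ᵥ v) =
      (fun i ↦ RCLike.re (v i)) ⬝ᵥ P *ᵥ (fun i ↦ RCLike.re (v i)) +
        (fun i ↦ RCLike.im (v i)) ⬝ᵥ P *ᵥ (fun i ↦ RCLike.im (v i)) := by
  simp only [dotProduct, mulVec, Finset.mul_sum, map_sum, ← Finset.sum_add_distrib]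
  refine Finset.sum_congr rfl fun i _ ↦ Finset.sum_congr rfl fun j _ ↦ ?_
  simp [RCLike.mul_re, RCLike.mul_im]

theorem PosDef.map_ofReal {P : Matrix ι ι ℝ} (hP : P.PosDef) :
    (P.map (algebraMap ℝ 𝕜)).PosDef := by
  have hherm : (P.map (algebraMap ℝ 𝕜)).IsHermitian :=
    hP.isHermitian.map _ fun x ↦ by simp
  refine .of_dotProduct_mulVec_pos hherm fun v hv ↦ RCLike.pos_iff.2
    ⟨?_, hherm.im_star_dotProduct_mulVec_self v⟩
  rw [re_star_dotProduct_map_ofReal_mulVec]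
  have hre_or_im : (fun i ↦ RCLike.re (v i)) ≠ 0 ∨ (fun i ↦ RCLike.im (v i)) ≠ 0 := by
    by_contra! h
    exact hv <| funext fun i ↦
      RCLike.ext (by simpa using congrFun h.1 i) (by simpa using congrFun h.2 i)
  rcases hre_or_im with hre | him
  · exact add_pos_of_pos_of_nonneg (hP.dotProduct_mulVec_pos hre)
      (hP.posSemidef.dotProduct_mulVec_nonneg _)
  · exact add_pos_of_nonneg_of_pos (hP.posSemidef.dotProduct_mulVec_nonneg _)
      (hP.dotProduct_mulVec_pos him)

lemma star_dotProduct_conjTranspose_mul_mul_mulVec_of_mulVec_eq_smul {R : Type*} [CommRing R]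
    [StarRing R] (B P : Matrix ι ι R) {μ : R} {v : ι → R} (hv : B *ᵥ v = μ • v) :
    star v ⬝ᵥ (Bᴴ * P * B) *ᵥ v = star μ * μ * (star v ⬝ᵥ P *ᵥ v) := by
  rw [← mulVec_mulVec, ← mulVec_mulVec, dotProduct_mulVec, ← star_mulVec, hv, star_smul,
    smul_dotProduct, mulVec_smul, dotProduct_smul, smul_eq_mul, smul_eq_mul, mul_assoc]

theorem norm_lt_one_of_mem_spectrum_of_lyapunov [DecidableEq ι] {B P Q : Matrix ι ι 𝕜}
    (hP : P.PosDef) (hQ : Q.PosDef) (h : Bᴴ * P * B - P = -Q) {μ : 𝕜}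
    (hμ : μ ∈ spectrum 𝕜 B) : ‖μ‖ < 1 := by
  rw [← spectrum_toLin', ← Module.End.hasEigenvalue_iff_mem_spectrum] at hμ
  obtain ⟨v, hv⟩ := hμ.exists_hasEigenvector
  have hBv : B *ᵥ v = μ • v := by simpa using hv.apply_eq_smul
  have hquad : ((‖μ‖ ^ 2 - 1 : ℝ) : 𝕜) * (star v ⬝ᵥ P *ᵥ v) = -(star v ⬝ᵥ Q *ᵥ v) := by
    have := congrArg (fun M ↦ star v ⬝ᵥ M *ᵥ v) h
    simp only [sub_mulVec, neg_mulVec, dotProduct_sub, dotProduct_neg,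
      star_dotProduct_conjTranspose_mul_mul_mulVec_of_mulVec_eq_smul B P hBv, RCLike.star_def,
      RCLike.conj_mul] at this
    push_cast
    linear_combination this
  by_contra! hμ1
  have hcoef : (0 : 𝕜) ≤ ((‖μ‖ ^ 2 - 1 : ℝ) : 𝕜) := by
    rw [RCLike.ofReal_nonneg]
    nlinarith
  have hQv : 0 ≤ -(star v ⬝ᵥ Q *ᵥ v) :=
    hquad ▸ mul_nonneg hcoef (hP.dotProduct_mulVec_pos hv.2).le
  exact (hQ.dotProduct_mulVec_pos hv.2).not_ge (neg_nonneg.1 hQv)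

end Matrix

/-- Discrete Lyapunov theorem: if AᵀPA - P = -Q with P, Q symmetric positive definite,
then every complex eigenvalue of A has modulus < 1. -/
theorem lyapunov_schur_stable {n : ℕ} (A P Q : Matrix (Fin n) (Fin n) ℝ)
    (hP : P.PosDef) (hQ : Q.PosDef)
    (h : Aᵀ * P * A - P = -Q) :
    ∀ μ : ℂ, μ ∈ spectrum ℂ (A.map (algebraMap ℝ ℂ)) → ‖μ‖ < 1 := by
  refine fun μ ↦ norm_lt_one_of_mem_spectrum_of_lyapunov hP.map_ofReal hQ.map_ofReal ?_
  rw [← conjTranspose_map _ fun x ↦ by simp, conjTranspose_eq_transpose_of_trivial,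
    ← Matrix.map_mul, ← Matrix.map_mul, ← Matrix.map_sub _ (map_sub _), h,
    Matrix.map_neg _ (map_neg _)]
end

section
/- For a real n×n matrix A and symmetric positive definite P, the inequality A'PA - P < 0 holds if and only if the block matrix [[-P, A'P], [PA, -P]] is negative definite. -/
/-!
Negating the block matrix gives `[[P, -AᵀP], [-PA, P]]`, which is congruent to
`diag(P - AᵀPA, P)` through the unipotent matrix `[[1, 0], [-A, 1]]`. Congruence by an
invertible matrix preserves positive definiteness, and a block-diagonal matrix is positive
definite iff both blocks are; since `P` is, this leaves exactly `P - AᵀPA > 0`.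
-/

open Matrix

namespace Matrix

variable {m n R : Type*} [Fintype m] [Fintype n] [Ring R]

theorem posDef_fromBlocks_zero_zero_iff [PartialOrder R] [StarRing R] [AddLeftMono R]
    {A : Matrix m m R} {D : Matrix n n R} :
    (fromBlocks A 0 0 D).PosDef ↔ A.PosDef ∧ D.PosDef := by
  refine ⟨fun h => ⟨h.submatrix Sum.inl_injective, h.submatrix Sum.inr_injective⟩,
    fun ⟨hA, hD⟩ => posDef_iff_dotProduct_mulVec.mpr ⟨hA.1.fromBlocks (by simp) hD.1, ?_⟩⟩
  intro x hx
  obtain ⟨y, z, rfl⟩ : ∃ y z, x = Sum.elim y z := ⟨_, _, (Sum.elim_comp_inl_inr x).symm⟩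
  rw [fromBlocks_mulVec, Function.star_sumElim]
  simp only [zero_mulVec, add_zero, zero_add, Sum.elim_comp_inl, Sum.elim_comp_inr,
    sumElim_dotProduct_sumElim]
  obtain hy | rfl := ne_or_eq y 0
  · exact add_pos_of_pos_of_nonneg (hA.dotProduct_mulVec_pos hy)
      (hD.posSemidef.dotProduct_mulVec_nonneg z)
  · have hz : z ≠ 0 := by rintro rfl; exact hx (Sum.elim_zero_zero ..)
    simpa using hD.dotProduct_mulVec_pos hz

variable [DecidableEq m] [DecidableEq n]

theorem isUnit_fromBlocks_one_zero_one (C : Matrix n m R) :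
    IsUnit (fromBlocks (1 : Matrix m m R) 0 C (1 : Matrix n n R)) := by
  refine ⟨⟨fromBlocks 1 0 C 1, fromBlocks 1 0 (-C) 1, ?_, ?_⟩, rfl⟩ <;>
    simp [fromBlocks_multiply, ← fromBlocks_one]

variable [StarRing R]

theorem fromBlocks_add_conjTranspose_mul_mul_eq (X : Matrix m m R) (C : Matrix n m R)
    (D : Matrix n n R) :
    fromBlocks (X + Cᴴ * D * C) (Cᴴ * D) (D * C) D =
      (fromBlocks 1 0 C 1)ᴴ * fromBlocks X 0 0 D * fromBlocks 1 0 C 1 := by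
  simp [fromBlocks_conjTranspose, fromBlocks_multiply, Matrix.mul_assoc]

theorem posDef_fromBlocks_add_conjTranspose_mul_mul_iff [PartialOrder R] [AddLeftMono R]
    (X : Matrix m m R) (C : Matrix n m R) (D : Matrix n n R) :
    (fromBlocks (X + Cᴴ * D * C) (Cᴴ * D) (D * C) D).PosDef ↔ X.PosDef ∧ D.PosDef := by
  rw [fromBlocks_add_conjTranspose_mul_mul_eq, ← star_eq_conjTranspose,
    (isUnit_fromBlocks_one_zero_one C).posDef_star_left_conjugate_iff,
    posDef_fromBlocks_zero_zero_iff]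

end Matrix

/-- For `P` symmetric positive definite, `AᵀPA - P < 0` iff the block matrix
`[[-P, AᵀP], [PA, -P]]` is negative definite. -/
theorem lyapunov_ineq_iff_block_negdef {n : ℕ} (A P : Matrix (Fin n) (Fin n) ℝ)
    (hP : P.PosDef) :
    (-(Aᵀ * P * A - P)).PosDef ↔
      (-(fromBlocks (-P) (Aᵀ * P) (P * A) (-P))).PosDef := by
  have hblock : -(fromBlocks (-P) (Aᵀ * P) (P * A) (-P)) =
      fromBlocks (-(Aᵀ * P * A - P) + (-A)ᴴ * P * (-A)) ((-A)ᴴ * P) (P * (-A)) P := by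
    simp [fromBlocks_neg, conjTranspose_eq_transpose_of_trivial]
  rw [hblock, posDef_fromBlocks_add_conjTranspose_mul_mul_iff, and_iff_left hP]
end
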